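/- Under the aggregated computational-graph setup, assume in addition that S is twice continuously differentiable. Let J = [I; S'(x₀)] ∈ ℝ^{(n+m)×n} (the matrix stacking the identity on top of S'(x₀)). Then the Hessian of the objective equals the reduced Hessian of the Lagrangian evaluated at the adjoint multipliers: for all u, v ∈ ℝ^n, ⟨u, ∇²f(x₀) v⟩ = ⟨J u, ∇²_{(x,s)}L(x₀, s₀, λ₀) (J v)⟩. -/

import Mathlib

open Matrix

/-!
Since `S x = Φ (x, S x)`, the penalty term of the Lagrangian vanishes along the graph
`x ↦ (x, S x)`, so `f = L ∘ (x ↦ (x, S x))` for every choice of multipliers. The second-order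
chain rule then gives `f''(u, v) = L''(Ju, Jv) + L'(0, S''(u, v))`, because the graph map has
second derivative `(0, S'')`. The adjoint equation `(I - ∂ₛΦ)ᵀ λ₀ = ∇ₛ g` says exactly that
`L'` vanishes on the directions `(0, w)`, which kills the curvature term of `S`.
-/

section SecondOrderChainRule

variable {𝕜 E F G : Type*} [NontriviallyNormedField 𝕜]
    [NormedAddCommGroup E] [NormedSpace 𝕜 E]
    [NormedAddCommGroup F] [NormedSpace 𝕜 F]
    [NormedAddCommGroup G] [NormedSpace 𝕜 G]

theorem iteratedFDeriv_two_comp_apply {g : F → G} {f : E → F} (hg : ContDiff 𝕜 2 g)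
    (hf : ContDiff 𝕜 2 f) (x u v : E) :
    iteratedFDeriv 𝕜 2 (g ∘ f) x ![u, v] =
      iteratedFDeriv 𝕜 2 g (f x) ![fderiv 𝕜 f x u, fderiv 𝕜 f x v]
        + fderiv 𝕜 g (f x) (iteratedFDeriv 𝕜 2 f x ![u, v]) := by
  have hg' : ContDiff 𝕜 1 (fderiv 𝕜 g) := hg.fderiv_right (by norm_num)
  have hf' : ContDiff 𝕜 1 (fderiv 𝕜 f) := hf.fderiv_right (by norm_num)
  have hfd : Differentiable 𝕜 f := hf.differentiable two_ne_zero
  have hgfd : Differentiable 𝕜 (fun y => fderiv 𝕜 g (f y)) :=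
    (hg'.comp (hf.of_le one_le_two)).differentiable one_ne_zero
  have hchain : fderiv 𝕜 (g ∘ f) = fun y => (fderiv 𝕜 g (f y)).comp (fderiv 𝕜 f y) :=
    funext fun y => fderiv_comp y (hg.differentiable two_ne_zero _) (hfd y)
  simp only [iteratedFDeriv_two_apply, Matrix.cons_val_zero, Matrix.cons_val_one]
  rw [hchain, fderiv_clm_comp (hgfd x) (hf'.differentiable one_ne_zero x),
    fderiv_fun_comp x (hg'.differentiable one_ne_zero _) (hfd x)]
  simp [add_comm]

theorem fderiv_graph_apply {S : E → F} {x : E} (hS : DifferentiableAt 𝕜 S x) (w : E) :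
    fderiv 𝕜 (fun y => (y, S y)) x w = (w, fderiv 𝕜 S x w) := by
  rw [differentiableAt_fun_id.fderiv_prodMk hS]
  simp

theorem iteratedFDeriv_two_graph_apply {S : E → F} {x : E} (hS : ContDiffAt 𝕜 2 S x) (u v : E) :
    iteratedFDeriv 𝕜 2 (fun y => (y, S y)) x ![u, v] = (0, iteratedFDeriv 𝕜 2 S x ![u, v]) := by
  rw [iteratedFDeriv_prodMk (f := fun y => y) contDiffAt_id hS le_rfl]
  have hid : fderiv 𝕜 (fun y : E => y) = fun _ => .id 𝕜 E := funext fun _ => fderiv_fun_id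
  simp [iteratedFDeriv_two_apply, hid]

end SecondOrderChainRule

section Lagrangian

variable {E ι : Type*} [Fintype ι]

def lagrangian (g : E × (ι → ℝ) → ℝ) (Φ : E × (ι → ℝ) → ι → ℝ) (lam : ι → ℝ)
    (p : E × (ι → ℝ)) : ℝ :=
  g p + lam ⬝ᵥ (Φ p - p.2)

variable {g : E × (ι → ℝ) → ℝ} {Φ : E × (ι → ℝ) → ι → ℝ} {lam : ι → ℝ}

theorem lagrangian_of_feasible {p : E × (ι → ℝ)} (hp : Φ p = p.2) :
    lagrangian g Φ lam p = g p := by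
  simp [lagrangian, hp]

theorem lagrangian_eq_comp_dotProduct :
    lagrangian g Φ lam =
      fun p => g p + LinearMap.toContinuousLinearMap (dotProductBilin ℝ ℝ lam) (Φ p - p.2) :=
  rfl

variable [NormedAddCommGroup E] [NormedSpace ℝ E]

theorem contDiff_lagrangian {n : WithTop ℕ∞} (hg : ContDiff ℝ n g) (hΦ : ContDiff ℝ n Φ) :
    ContDiff ℝ n (lagrangian g Φ lam) := by
  rw [lagrangian_eq_comp_dotProduct]
  exact hg.add ((ContinuousLinearMap.contDiff _).comp (hΦ.sub contDiff_snd))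

theorem fderiv_lagrangian_apply {p : E × (ι → ℝ)} (hg : DifferentiableAt ℝ g p)
    (hΦ : DifferentiableAt ℝ Φ p) (q : E × (ι → ℝ)) :
    fderiv ℝ (lagrangian g Φ lam) p q = fderiv ℝ g p q + lam ⬝ᵥ (fderiv ℝ Φ p q - q.2) := by
  have h : HasFDerivAt (lagrangian g Φ lam) _ p :=
    hg.hasFDerivAt.add
      ((LinearMap.toContinuousLinearMap (dotProductBilin ℝ ℝ lam)).hasFDerivAt.comp p
      (hΦ.hasFDerivAt.sub hasFDerivAt_snd))
  rw [h.fderiv]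
  rfl

theorem fderiv_lagrangian_inr_eq_zero [DecidableEq ι] {p : E × (ι → ℝ)}
    (hg : DifferentiableAt ℝ g p) (hΦ : DifferentiableAt ℝ Φ p) {Φs : Matrix ι ι ℝ}
    (hΦs : ∀ w, fderiv ℝ Φ p (0, w) = Φs *ᵥ w)
    (hlam : ∀ w, (1 - Φs)ᵀ *ᵥ lam ⬝ᵥ w = fderiv ℝ g p (0, w)) (w : ι → ℝ) :
    fderiv ℝ (lagrangian g Φ lam) p (0, w) = 0 := by
  rw [fderiv_lagrangian_apply hg hΦ, ← hlam, hΦs, mulVec_transpose, ← dotProduct_mulVec,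
    ← dotProduct_add, sub_mulVec, one_mulVec]
  simp

end Lagrangian

theorem objective_hessian_eq_reduced_lagrangian_hessian_general
    (n m : ℕ)
    (g : (Fin n → ℝ) × (Fin m → ℝ) → ℝ)
    (Φ : (Fin n → ℝ) × (Fin m → ℝ) → (Fin m → ℝ))
    (S : (Fin n → ℝ) → (Fin m → ℝ))
    (f : (Fin n → ℝ) → ℝ)
    (L : (Fin n → ℝ) × (Fin m → ℝ) → ℝ)
    (x₀ : Fin n → ℝ) (s₀ : Fin m → ℝ) (lam₀ : Fin m → ℝ)
    (Φx : Matrix (Fin m) (Fin n) ℝ) (Φs : Matrix (Fin m) (Fin m) ℝ)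
    (hg : ContDiff ℝ 2 g) (hΦ : ContDiff ℝ 2 Φ)
    (hS : ContDiff ℝ 2 S)
    (hrec : ∀ x, S x = Φ (x, S x))
    (hf : ∀ x, f x = g (x, S x))
    (hs₀ : s₀ = S x₀)
    (hΦx : ∀ (u : Fin n → ℝ) (v : Fin m → ℝ),
      fderiv ℝ Φ (x₀, s₀) (u, v) = Φx.mulVec u + Φs.mulVec v)
    (hlam₀ : ∀ v : Fin m → ℝ,
      ((1 - Φs)ᵀ.mulVec lam₀) ⬝ᵥ v = fderiv ℝ g (x₀, s₀) (0, v))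
    (hL : ∀ p : (Fin n → ℝ) × (Fin m → ℝ), L p = g p + lam₀ ⬝ᵥ (Φ p - p.2)) :
    ∀ u v : Fin n → ℝ,
      iteratedFDeriv ℝ 2 f x₀ ![u, v]
        = iteratedFDeriv ℝ 2 L (x₀, s₀)
            ![(u, fderiv ℝ S x₀ u), (v, fderiv ℝ S x₀ v)] := by
  subst hs₀
  intro u v
  have hL_eq : L = lagrangian g Φ lam₀ := funext hL
  have hf_eq : f = L ∘ fun x => (x, S x) := funext fun x => by
    rw [hf, Function.comp_apply, hL_eq, lagrangian_of_feasible (hrec x).symm]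
  have hL_inr : ∀ w, fderiv ℝ L (x₀, S x₀) (0, w) = 0 := by
    rw [hL_eq]
    exact fderiv_lagrangian_inr_eq_zero (hg.differentiable two_ne_zero _)
      (hΦ.differentiable two_ne_zero _) (fun w => by simpa using hΦx 0 w) hlam₀
  rw [hf_eq, iteratedFDeriv_two_comp_apply (hL_eq ▸ contDiff_lagrangian hg hΦ)
      (contDiff_fun_id.prodMk hS), iteratedFDeriv_two_graph_apply hS.contDiffAt, hL_inr, add_zero,
    fderiv_graph_apply (hS.differentiable two_ne_zero _),
    fderiv_graph_apply (hS.differentiable two_ne_zero _)]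

/-- With multipliers set to the reverse-AD adjoints, the Hessian of the objective
equals the reduced Hessian of the Lagrangian: for all u, v,
⟨u, ∇²f(x₀) v⟩ = ⟨J u, ∇²L(x₀,s₀,lam₀) (J v)⟩ where J u = (u, S'(x₀) u). -/
theorem objective_hessian_eq_reduced_lagrangian_hessian
    (n m : ℕ)
    (g : (Fin n → ℝ) × (Fin m → ℝ) → ℝ)
    (Φ : (Fin n → ℝ) × (Fin m → ℝ) → (Fin m → ℝ))
    (S : (Fin n → ℝ) → (Fin m → ℝ))
    (f : (Fin n → ℝ) → ℝ)
    (L : (Fin n → ℝ) × (Fin m → ℝ) → ℝ)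
    (x₀ : Fin n → ℝ) (s₀ : Fin m → ℝ) (lam₀ : Fin m → ℝ)
    (Φx : Matrix (Fin m) (Fin n) ℝ) (Φs : Matrix (Fin m) (Fin m) ℝ)
    (hg : ContDiff ℝ 2 g) (hΦ : ContDiff ℝ 2 Φ)
    (hS : ContDiff ℝ 2 S)
    (hrec : ∀ x, S x = Φ (x, S x))
    (hf : ∀ x, f x = g (x, S x))
    (hs₀ : s₀ = S x₀)
    (hΦx : ∀ (u : Fin n → ℝ) (v : Fin m → ℝ),
      fderiv ℝ Φ (x₀, s₀) (u, v) = Φx.mulVec u + Φs.mulVec v)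
    (hIinv : IsUnit (1 - Φs))
    (hlam₀ : ∀ v : Fin m → ℝ,
      ((1 - Φs)ᵀ.mulVec lam₀) ⬝ᵥ v = fderiv ℝ g (x₀, s₀) (0, v))
    (hL : ∀ p : (Fin n → ℝ) × (Fin m → ℝ), L p = g p + lam₀ ⬝ᵥ (Φ p - p.2)) :
    ∀ u v : Fin n → ℝ,
      iteratedFDeriv ℝ 2 f x₀ ![u, v]
        = iteratedFDeriv ℝ 2 L (x₀, s₀)
            ![(u, fderiv ℝ S x₀ u), (v, fderiv ℝ S x₀ v)] :=
  objective_hessian_eq_reduced_lagrangian_hessian_general n m g Φ S f L x₀ s₀ lam₀ Φx Φs hg hΦ hS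
    hrec hf hs₀ hΦx hlam₀ hL
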